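/- If a 3-qubit state a is nonzero and satisfies D²q(a)[y,z] + 4{a,y}{a,z} = 0 for all 3-qubit states y, z (FTS rank 1, i.e. Υ_a(y) = 0 for all y), then a is SLOCC-equivalent to the totally separable representative |111⟩, i.e. to the state b with b₁₁₁ = 1 and all other components zero. -/

import Mathlib

/-- A 3-qubit state: a map `Fin 2 → Fin 2 → Fin 2 → ℂ` with components `a i j k`. -/
abbrev QState3 : Type := Fin 2 → Fin 2 → Fin 2 → ℂ

/-- The action of the SLOCC-equivalence group `SL(2,ℂ)×SL(2,ℂ)×SL(2,ℂ)` on 3-qubit states: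
`((g₁,g₂,g₃)·a)_{ijk} = Σ (g₁)_{ii'} (g₂)_{jj'} (g₃)_{kk'} a_{i'j'k'}`. -/
noncomputable def sloccAct (g₁ g₂ g₃ : Matrix.SpecialLinearGroup (Fin 2) ℂ) (a : QState3) : QState3 :=
  fun i j k => ∑ i' : Fin 2, ∑ j' : Fin 2, ∑ k' : Fin 2,
    (g₁ : Matrix (Fin 2) (Fin 2) ℂ) i i' * (g₂ : Matrix (Fin 2) (Fin 2) ℂ) j j' *
      (g₃ : Matrix (Fin 2) (Fin 2) ℂ) k k' * a i' j' k'

/-- The quartic norm `q` of a 3-qubit state (Cayley's hyperdeterminant up to scale). -/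
def quarticQ3 (a : QState3) : ℂ :=
  -2 * (a 1 1 1 * a 0 0 0 -
      (a 0 0 1 * a 1 1 0 + a 0 1 0 * a 1 0 1 + a 1 0 0 * a 0 1 1)) ^ 2 -
    8 * (a 1 1 1 * a 0 0 1 * a 0 1 0 * a 1 0 0 + a 0 0 0 * a 1 1 0 * a 1 0 1 * a 0 1 1 -
      (a 0 1 0 * a 1 0 0 * a 1 0 1 * a 0 1 1 + a 0 0 1 * a 1 0 0 * a 1 1 0 * a 0 1 1 +
        a 0 0 1 * a 0 1 0 * a 1 1 0 * a 1 0 1))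

/-- The symplectic (antisymmetric bilinear) form of two 3-qubit states. -/
def symplQ3 (a b : QState3) : ℂ :=
  a 1 1 1 * b 0 0 0 - a 0 0 0 * b 1 1 1 +
    (a 0 0 1 * b 1 1 0 + a 0 1 0 * b 1 0 1 + a 1 0 0 * b 0 1 1) -
    (a 1 1 0 * b 0 0 1 + a 1 0 1 * b 0 1 0 + a 0 1 1 * b 1 0 0)

noncomputable def ev (i j k : Fin 2) : QState3 →L[ℂ] ℂ :=
  (ContinuousLinearMap.proj (R := ℂ) (φ := fun _ : Fin 2 => ℂ) k).comp
    ((ContinuousLinearMap.proj (R := ℂ) (φ := fun _ : Fin 2 => Fin 2 → ℂ) j).comp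
      (ContinuousLinearMap.proj (R := ℂ) (φ := fun _ : Fin 2 => Fin 2 → Fin 2 → ℂ) i))

@[simp] lemma ev_apply (i j k : Fin 2) (x : QState3) : ev i j k x = x i j k := rfl

def Pf (x : QState3) : ℂ :=
  x 1 1 1 * x 0 0 0 - (x 0 0 1 * x 1 1 0 + x 0 1 0 * x 1 0 1 + x 1 0 0 * x 0 1 1)

def DPf (x z : QState3) : ℂ := (z 1 1 1 * x 0 0 0 + z 0 0 0 * x 1 1 1) - (z 1 1 0 * x 0 0 1 + z 0 0 1 * x 1 1 0 + z 1 0 1 * x 0 1 0 + z 0 1 0 * x 1 0 1 + z 0 1 1 * x 1 0 0 + z 1 0 0 * x 0 1 1)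

def DQf (x z : QState3) : ℂ := (z 1 1 1 * (x 0 0 1 * x 0 1 0 * x 1 0 0) + z 0 0 1 * (x 1 1 1 * x 0 1 0 * x 1 0 0) + z 0 1 0 * (x 1 1 1 * x 0 0 1 * x 1 0 0) + z 1 0 0 * (x 1 1 1 * x 0 0 1 * x 0 1 0) + z 0 0 0 * (x 1 1 0 * x 1 0 1 * x 0 1 1) + z 1 1 0 * (x 0 0 0 * x 1 0 1 * x 0 1 1) + z 1 0 1 * (x 0 0 0 * x 1 1 0 * x 0 1 1) + z 0 1 1 * (x 0 0 0 * x 1 1 0 * x 1 0 1)) - (z 0 1 0 * (x 1 0 0 * x 1 0 1 * x 0 1 1) + z 1 0 0 * (x 0 1 0 * x 1 0 1 * x 0 1 1) + z 1 0 1 * (x 0 1 0 * x 1 0 0 * x 0 1 1) + z 0 1 1 * (x 0 1 0 * x 1 0 0 * x 1 0 1) + z 0 0 1 * (x 1 0 0 * x 1 1 0 * x 0 1 1) + z 1 0 0 * (x 0 0 1 * x 1 1 0 * x 0 1 1) + z 1 1 0 * (x 0 0 1 * x 1 0 0 * x 0 1 1) + z 0 1 1 * (x 0 0 1 * x 1 0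 0 * x 1 1 0) + z 0 0 1 * (x 0 1 0 * x 1 1 0 * x 1 0 1) + z 0 1 0 * (x 0 0 1 * x 1 1 0 * x 1 0 1) + z 1 1 0 * (x 0 0 1 * x 0 1 0 * x 1 0 1) + z 1 0 1 * (x 0 0 1 * x 0 1 0 * x 1 1 0))

def DDQf (a y z : QState3) : ℂ := (z 1 1 1 * (y 0 0 1 * a 0 1 0 * a 1 0 0) + z 1 1 1 * (a 0 0 1 * y 0 1 0 * a 1 0 0) + z 1 1 1 * (a 0 0 1 * a 0 1 0 * y 1 0 0) + z 0 0 1 * (y 1 1 1 * a 0 1 0 * a 1 0 0) + z 0 0 1 * (a 1 1 1 * y 0 1 0 * a 1 0 0) + z 0 0 1 * (a 1 1 1 * a 0 1 0 * y 1 0 0) + z 0 1 0 * (y 1 1 1 * a 0 0 1 * a 1 0 0) + z 0 1 0 * (a 1 1 1 * y 0 0 1 * a 1 0 0) + z 0 1 0 * (a 1 1 1 * a 0 0 1 * y 1 0 0) + z 1 0 0 * (y 1 1 1 * a 0 0 1 * a 0 1 0) + z 1 0 0 * (a 1 1 1 * y 0 0 1 * a 0 1 0) + z 1 0 0 * (a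 1 1 1 * a 0 0 1 * y 0 1 0) + z 0 0 0 * (y 1 1 0 * a 1 0 1 * a 0 1 1) + z 0 0 0 * (a 1 1 0 * y 1 0 1 * a 0 1 1) + z 0 0 0 * (a 1 1 0 * a 1 0 1 * y 0 1 1) + z 1 1 0 * (y 0 0 0 * a 1 0 1 * a 0 1 1) + z 1 1 0 * (a 0 0 0 * y 1 0 1 * a 0 1 1) + z 1 1 0 * (a 0 0 0 * a 1 0 1 * y 0 1 1) + z 1 0 1 * (y 0 0 0 * a 1 1 0 * a 0 1 1) + z 1 0 1 * (a 0 0 0 * y 1 1 0 * a 0 1 1) + z 1 0 1 * (a 0 0 0 * a 1 1 0 * y 0 1 1) + z 0 1 1 * (y 0 0 0 * a 1 1 0 * a 1 0 1) + z 0 1 1 * (a 0 0 0 * y 1 1 0 * a 1 0 1) + z 0 1 1 * (a 0 0 0 * a 1 1 0 * y 1 0 1)) - (z 0 1 0 * (y 1 0 0 * a 1 0 1 * a 0 1 1) + z 0 1 0 * (a 1 0 0 * y 1 0 1 * a 0 1 1) + z 0 1 0 * (a 1 0 0 * a 1 0 1 * y 0 1 1) + z 1 0 0 * (y 0 1 0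 * a 1 0 1 * a 0 1 1) + z 1 0 0 * (a 0 1 0 * y 1 0 1 * a 0 1 1) + z 1 0 0 * (a 0 1 0 * a 1 0 1 * y 0 1 1) + z 1 0 1 * (y 0 1 0 * a 1 0 0 * a 0 1 1) + z 1 0 1 * (a 0 1 0 * y 1 0 0 * a 0 1 1) + z 1 0 1 * (a 0 1 0 * a 1 0 0 * y 0 1 1) + z 0 1 1 * (y 0 1 0 * a 1 0 0 * a 1 0 1) + z 0 1 1 * (a 0 1 0 * y 1 0 0 * a 1 0 1) + z 0 1 1 * (a 0 1 0 * a 1 0 0 * y 1 0 1) + z 0 0 1 * (y 1 0 0 * a 1 1 0 * a 0 1 1) + z 0 0 1 * (a 1 0 0 * y 1 1 0 * a 0 1 1) + z 0 0 1 * (a 1 0 0 * a 1 1 0 * y 0 1 1) + z 1 0 0 * (y 0 0 1 * a 1 1 0 * a 0 1 1) + z 1 0 0 * (a 0 0 1 * y 1 1 0 * a 0 1 1) + z 1 0 0 * (a 0 0 1 * a 1 1 0 * y 0 1 1) + z 1 1 0 * (y 0 0 1 * a 1 0 0 * a 0 1 1) + z 1 1 0 * (a 0 0 1 * y 1 0 0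 * a 0 1 1) + z 1 1 0 * (a 0 0 1 * a 1 0 0 * y 0 1 1) + z 0 1 1 * (y 0 0 1 * a 1 0 0 * a 1 1 0) + z 0 1 1 * (a 0 0 1 * y 1 0 0 * a 1 1 0) + z 0 1 1 * (a 0 0 1 * a 1 0 0 * y 1 1 0) + z 0 0 1 * (y 0 1 0 * a 1 1 0 * a 1 0 1) + z 0 0 1 * (a 0 1 0 * y 1 1 0 * a 1 0 1) + z 0 0 1 * (a 0 1 0 * a 1 1 0 * y 1 0 1) + z 0 1 0 * (y 0 0 1 * a 1 1 0 * a 1 0 1) + z 0 1 0 * (a 0 0 1 * y 1 1 0 * a 1 0 1) + z 0 1 0 * (a 0 0 1 * a 1 1 0 * y 1 0 1) + z 1 1 0 * (y 0 0 1 * a 0 1 0 * a 1 0 1) + z 1 1 0 * (a 0 0 1 * y 0 1 0 * a 1 0 1) + z 1 1 0 * (a 0 0 1 * a 0 1 0 * y 1 0 1) + z 1 0 1 * (y 0 0 1 * a 0 1 0 * a 1 1 0) + z 1 0 1 * (a 0 0 1 * y 0 1 0 * a 1 1 0) + z 1 0 1 * (a 0 0 1 * a 0 1 0 * y 1 1 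0))

lemma fderiv_q_apply (x z : QState3) :
    fderiv ℂ quarticQ3 x z = -4 * Pf x * DPf x z - 8 * DQf x z := by
  have h000 : HasFDerivAt (fun a : QState3 => a 0 0 0) (ev 0 0 0) x := (ev 0 0 0).hasFDerivAt
  have h001 : HasFDerivAt (fun a : QState3 => a 0 0 1) (ev 0 0 1) x := (ev 0 0 1).hasFDerivAt
  have h010 : HasFDerivAt (fun a : QState3 => a 0 1 0) (ev 0 1 0) x := (ev 0 1 0).hasFDerivAt
  have h011 : HasFDerivAt (fun a : QState3 => a 0 1 1) (ev 0 1 1) x := (ev 0 1 1).hasFDerivAt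
  have h100 : HasFDerivAt (fun a : QState3 => a 1 0 0) (ev 1 0 0) x := (ev 1 0 0).hasFDerivAt
  have h101 : HasFDerivAt (fun a : QState3 => a 1 0 1) (ev 1 0 1) x := (ev 1 0 1).hasFDerivAt
  have h110 : HasFDerivAt (fun a : QState3 => a 1 1 0) (ev 1 1 0) x := (ev 1 1 0).hasFDerivAt
  have h111 : HasFDerivAt (fun a : QState3 => a 1 1 1) (ev 1 1 1) x := (ev 1 1 1).hasFDerivAt
  have hP := (h111.mul h000).sub (((h001.mul h110).add (h010.mul h101)).add (h100.mul h011))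
  have hQ := ((((h111.mul h001).mul h010).mul h100).add (((h000.mul h110).mul h101).mul h011)).sub (((((h010.mul h100).mul h101).mul h011).add ((((h001.mul h100).mul h110).mul h011))).add ((((h001.mul h010).mul h110).mul h101)))
  have hP2 := hP.mul hP
  simp only [← pow_two] at hP2
  have hq : HasFDerivAt quarticQ3 _ x := (hP2.const_mul (-2 : ℂ)).sub (hQ.const_mul (8 : ℂ))
  rw [hq.fderiv]
  simp only [ContinuousLinearMap.add_apply, ContinuousLinearMap.sub_apply,
    ContinuousLinearMap.smul_apply, ContinuousLinearMap.coe_smul', Pi.smul_apply,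
    smul_eq_mul, ev_apply, Pf, DPf, DQf, Pi.mul_apply, Pi.sub_apply, Pi.add_apply, Pi.pow_apply]
  push_cast
  ring

lemma fderiv_g_apply (z a y : QState3) :
    fderiv ℂ (fun x => -4 * Pf x * DPf x z - 8 * DQf x z) a y
      = -4 * (DPf a y * DPf a z + Pf a * DPf y z) - 8 * DDQf a y z := by
  have h000 : HasFDerivAt (fun w : QState3 => w 0 0 0) (ev 0 0 0) a := (ev 0 0 0).hasFDerivAt
  have h001 : HasFDerivAt (fun w : QState3 => w 0 0 1) (ev 0 0 1) a := (ev 0 0 1).hasFDerivAt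
  have h010 : HasFDerivAt (fun w : QState3 => w 0 1 0) (ev 0 1 0) a := (ev 0 1 0).hasFDerivAt
  have h011 : HasFDerivAt (fun w : QState3 => w 0 1 1) (ev 0 1 1) a := (ev 0 1 1).hasFDerivAt
  have h100 : HasFDerivAt (fun w : QState3 => w 1 0 0) (ev 1 0 0) a := (ev 1 0 0).hasFDerivAt
  have h101 : HasFDerivAt (fun w : QState3 => w 1 0 1) (ev 1 0 1) a := (ev 1 0 1).hasFDerivAt
  have h110 : HasFDerivAt (fun w : QState3 => w 1 1 0) (ev 1 1 0) a := (ev 1 1 0).hasFDerivAt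
  have h111 : HasFDerivAt (fun w : QState3 => w 1 1 1) (ev 1 1 1) a := (ev 1 1 1).hasFDerivAt
  have hP := (h111.mul h000).sub (((h001.mul h110).add (h010.mul h101)).add (h100.mul h011))
  have hQz := ((((((((((h001.mul h010).mul h100).const_mul (z 1 1 1)).add (((h111.mul h010).mul h100).const_mul (z 0 0 1))).add (((h111.mul h001).mul h100).const_mul (z 0 1 0))).add (((h111.mul h001).mul h010).const_mul (z 1 0 0))).add (((h110.mul h101).mul h011).const_mul (z 0 0 0))).add (((h000.mul h101).mul h011).const_mul (z 1 1 0))).add (((h000.mul h110).mul h011).const_mul (z 1 0 1))).add (((h000.mul h110).mul h101).const_mul (z 0 1 1))).sub ((((((((((((((h100.mul h101).mul h011).const_mul (z 0 1 0)).add (((h010.mul h101).mul h011).const_mul (z 1 0 0))).add (((h010.mul h100).mul h011).const_mul (z 1 0 1))).add (((h010.mul h100).mul h101).const_mul (z 0 1 1))).add (((h100.mul h110).mul h011).const_mul (z 0 0 1))).add (((h001.mul h110).mul h011).const_mul (z 1 0 0))).add (((h001.mul h100).mul h011).const_mul (z 1 1 0))).add (((h001.mul h100).mul h110).const_mul (z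 0 1 1))).add (((h010.mul h110).mul h101).const_mul (z 0 0 1))).add (((h001.mul h110).mul h101).const_mul (z 0 1 0))).add (((h001.mul h010).mul h101).const_mul (z 1 1 0))).add (((h001.mul h010).mul h110).const_mul (z 1 0 1)))
  have hDPz := ((h000.const_mul (z 1 1 1)).add (h111.const_mul (z 0 0 0))).sub ((((((h001.const_mul (z 1 1 0)).add (h110.const_mul (z 0 0 1))).add (h010.const_mul (z 1 0 1))).add (h101.const_mul (z 0 1 0))).add (h100.const_mul (z 0 1 1))).add (h011.const_mul (z 1 0 0)))
  have hG := ((hP.const_mul (-4 : ℂ)).mul hDPz).sub (hQz.const_mul (8 : ℂ))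
  simp only [Pf, DPf, DQf, DDQf]
  erw [hG.fderiv]
  simp only [ContinuousLinearMap.add_apply, ContinuousLinearMap.sub_apply,
    ContinuousLinearMap.smul_apply, ContinuousLinearMap.coe_smul', Pi.smul_apply,
    smul_eq_mul, ev_apply, Pi.mul_apply, Pi.sub_apply, Pi.add_apply]
  ring

lemma contDiff_q : ContDiff ℂ 2 quarticQ3 := by
  have h : ∀ i j k : Fin 2, ContDiff ℂ 2 (fun a : QState3 => a i j k) :=
    fun i j k => (ev i j k).contDiff
  have hP : ContDiff ℂ 2 (fun x : QState3 => x 1 1 1 * x 0 0 0 -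
      (x 0 0 1 * x 1 1 0 + x 0 1 0 * x 1 0 1 + x 1 0 0 * x 0 1 1)) :=
    ((h 1 1 1).mul (h 0 0 0)).sub ((((h 0 0 1).mul (h 1 1 0)).add
      ((h 0 1 0).mul (h 1 0 1))).add ((h 1 0 0).mul (h 0 1 1)))
  have hQ : ContDiff ℂ 2 (fun x : QState3 => x 1 1 1 * x 0 0 1 * x 0 1 0 * x 1 0 0 +
      x 0 0 0 * x 1 1 0 * x 1 0 1 * x 0 1 1 -
      (x 0 1 0 * x 1 0 0 * x 1 0 1 * x 0 1 1 + x 0 0 1 * x 1 0 0 * x 1 1 0 * x 0 1 1 +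
        x 0 0 1 * x 0 1 0 * x 1 1 0 * x 1 0 1)) :=
    (((((h 1 1 1).mul (h 0 0 1)).mul (h 0 1 0)).mul (h 1 0 0)).add
      ((((h 0 0 0).mul (h 1 1 0)).mul (h 1 0 1)).mul (h 0 1 1))).sub
      ((((((h 0 1 0).mul (h 1 0 0)).mul (h 1 0 1)).mul (h 0 1 1)).add
        ((((h 0 0 1).mul (h 1 0 0)).mul (h 1 1 0)).mul (h 0 1 1))).add
        ((((h 0 0 1).mul (h 0 1 0)).mul (h 1 1 0)).mul (h 1 0 1)))
  exact (contDiff_const.mul (hP.pow 2)).sub (contDiff_const.mul hQ)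

lemma fderiv2_q (a y z : QState3) :
    fderiv ℂ (fderiv ℂ quarticQ3) a y z
      = -4 * (DPf a y * DPf a z + Pf a * DPf y z) - 8 * DDQf a y z := by
  have hd : DifferentiableAt ℂ (fderiv ℂ quarticQ3) a := by
    have := (contDiff_q.fderiv_right (m := 1) (by norm_num)).differentiable (by norm_num)
    exact (this a)
  have h2 := fderiv_clm_apply (c := fderiv ℂ quarticQ3) (u := fun _ : QState3 => z)
    (x := a) hd (differentiableAt_const z)
  have h1 : (fun x => fderiv ℂ quarticQ3 x ((fun _ : QState3 => z) x))
      = fun x => -4 * Pf x * DPf x z - 8 * DQf x z := funext fun x => fderiv_q_apply x z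
  rw [h1] at h2
  have h3 := congrArg (fun (L : QState3 →L[ℂ] ℂ) => L y) h2
  simp only [fderiv_fun_const, Pi.zero_apply, ContinuousLinearMap.comp_zero, zero_add,
    ContinuousLinearMap.add_apply, ContinuousLinearMap.flip_apply] at h3
  rw [fderiv_g_apply] at h3
  rw [← h3]

lemma sl2_move (v : Fin 2 → ℂ) (hv : v 0 ≠ 0 ∨ v 1 ≠ 0) :
    ∃ g : Matrix.SpecialLinearGroup (Fin 2) ℂ,
      (g : Matrix (Fin 2) (Fin 2) ℂ) 0 0 * v 0 + (g : Matrix (Fin 2) (Fin 2) ℂ) 0 1 * v 1 = 0 ∧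
      (g : Matrix (Fin 2) (Fin 2) ℂ) 1 0 * v 0 + (g : Matrix (Fin 2) (Fin 2) ℂ) 1 1 * v 1 = 1 := by
  rcases hv with h | h
  · refine ⟨⟨!![v 1, -v 0; (v 0)⁻¹, 0], ?_⟩, ?_, ?_⟩
    · rw [Matrix.det_fin_two_of]
      field_simp
      ring
    · show v 1 * v 0 + -v 0 * v 1 = 0
      ring
    · show (v 0)⁻¹ * v 0 + 0 * v 1 = 1
      field_simp
      ring
  · refine ⟨⟨!![v 1, -v 0; 0, (v 1)⁻¹], ?_⟩, ?_, ?_⟩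
    · rw [Matrix.det_fin_two_of]
      field_simp
      ring
    · show v 1 * v 0 + -v 0 * v 1 = 0
      ring
    · show 0 * v 0 + (v 1)⁻¹ * v 1 = 1
      field_simp
      ring

set_option maxHeartbeats 4000000 in
/-- A nonzero rank-1 state (`Υ_a(y) = 0` for all `y`, i.e.
`D²q(a)[y,z] + 4{a,y}{a,z} = 0` for all `y, z`) is SLOCC-equivalent to the totally
separable representative `|111⟩`. -/
theorem rank1_separable_class :
    ∀ a : QState3, a ≠ 0 →
      (∀ y z : QState3,
        fderiv ℂ (fderiv ℂ quarticQ3) a y z + 4 * symplQ3 a y * symplQ3 a z = 0) →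
      ∃ g₁ g₂ g₃ : Matrix.SpecialLinearGroup (Fin 2) ℂ,
        sloccAct g₁ g₂ g₃ a = fun i j k =>
          if (i, j, k) = (1, 1, 1) then 1 else 0 := by
  intro a ha hyp
  have key : ∀ y z : QState3,
      -4 * (DPf a y * DPf a z + Pf a * DPf y z) - 8 * DDQf a y z
        + 4 * symplQ3 a y * symplQ3 a z = 0 := fun y z => by
    rw [← fderiv2_q]; exact hyp y z
  have E1 := key (fun i' j' k' => if i' = (0 : Fin 2) ∧ j' = (1 : Fin 2) ∧ k' = (0 : Fin 2) then (1:ℂ) else 0) (fun i' j' k' => if i' = (1 : Fin 2) ∧ j' = (1 : Fin 2) ∧ k' = (1 : Fin 2) then (1:ℂ) else 0)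
  have E2 := key (fun i' j' k' => if i' = (0 : Fin 2) ∧ j' = (0 : Fin 2) ∧ k' = (1 : Fin 2) then (1:ℂ) else 0) (fun i' j' k' => if i' = (1 : Fin 2) ∧ j' = (1 : Fin 2) ∧ k' = (1 : Fin 2) then (1:ℂ) else 0)
  have E3 := key (fun i' j' k' => if i' = (1 : Fin 2) ∧ j' = (0 : Fin 2) ∧ k' = (0 : Fin 2) then (1:ℂ) else 0) (fun i' j' k' => if i' = (1 : Fin 2) ∧ j' = (1 : Fin 2) ∧ k' = (1 : Fin 2) then (1:ℂ) else 0)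
  have E4 := key (fun i' j' k' => if i' = (0 : Fin 2) ∧ j' = (0 : Fin 2) ∧ k' = (0 : Fin 2) then (1:ℂ) else 0) (fun i' j' k' => if i' = (0 : Fin 2) ∧ j' = (1 : Fin 2) ∧ k' = (1 : Fin 2) then (1:ℂ) else 0)
  have E5 := key (fun i' j' k' => if i' = (0 : Fin 2) ∧ j' = (0 : Fin 2) ∧ k' = (0 : Fin 2) then (1:ℂ) else 0) (fun i' j' k' => if i' = (1 : Fin 2) ∧ j' = (0 : Fin 2) ∧ k' = (1 : Fin 2) then (1:ℂ) else 0)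
  have E6 := key (fun i' j' k' => if i' = (0 : Fin 2) ∧ j' = (0 : Fin 2) ∧ k' = (0 : Fin 2) then (1:ℂ) else 0) (fun i' j' k' => if i' = (1 : Fin 2) ∧ j' = (1 : Fin 2) ∧ k' = (0 : Fin 2) then (1:ℂ) else 0)
  have E7 := key (fun i' j' k' => if i' = (0 : Fin 2) ∧ j' = (0 : Fin 2) ∧ k' = (0 : Fin 2) then (1:ℂ) else 0) (fun i' j' k' => if i' = (1 : Fin 2) ∧ j' = (1 : Fin 2) ∧ k' = (1 : Fin 2) then (1:ℂ) else 0)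
  have E8 := key (fun i' j' k' => if i' = (0 : Fin 2) ∧ j' = (0 : Fin 2) ∧ k' = (1 : Fin 2) then (1:ℂ) else 0) (fun i' j' k' => if i' = (1 : Fin 2) ∧ j' = (1 : Fin 2) ∧ k' = (0 : Fin 2) then (1:ℂ) else 0)
  have E9 := key (fun i' j' k' => if i' = (0 : Fin 2) ∧ j' = (1 : Fin 2) ∧ k' = (0 : Fin 2) then (1:ℂ) else 0) (fun i' j' k' => if i' = (1 : Fin 2) ∧ j' = (0 : Fin 2) ∧ k' = (1 : Fin 2) then (1:ℂ) else 0)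
  have E10 := key (fun i' j' k' => if i' = (0 : Fin 2) ∧ j' = (1 : Fin 2) ∧ k' = (1 : Fin 2) then (1:ℂ) else 0) (fun i' j' k' => if i' = (1 : Fin 2) ∧ j' = (0 : Fin 2) ∧ k' = (0 : Fin 2) then (1:ℂ) else 0)
  norm_num [Pf, DPf, DDQf, symplQ3] at E1 E2 E3 E4 E5 E6 E7 E8 E9 E10
  have m1 : a 0 0 0 * a 1 0 1 = a 0 0 1 * a 1 0 0 := by
    first | linear_combination E1 / 8 | linear_combination -E1 / 8 | linear_combination E1 | linear_combination -E1
  have m2 : a 0 0 0 * a 1 1 0 = a 0 1 0 * a 1 0 0 := by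
    first | linear_combination E2 / 8 | linear_combination -E2 / 8 | linear_combination E2 | linear_combination -E2
  have m3 : a 0 0 0 * a 0 1 1 = a 0 0 1 * a 0 1 0 := by
    first | linear_combination E3 / 8 | linear_combination -E3 / 8 | linear_combination E3 | linear_combination -E3
  have m4 : a 1 0 0 * a 1 1 1 = a 1 0 1 * a 1 1 0 := by
    first | linear_combination E4 / 8 | linear_combination -E4 / 8 | linear_combination E4 | linear_combination -E4
  have m5 : a 0 1 0 * a 1 1 1 = a 0 1 1 * a 1 1 0 := by
    first | linear_combination E5 / 8 | linear_combination -E5 / 8 | linear_combination E5 | linear_combination -E5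
  have m6 : a 0 0 1 * a 1 1 1 = a 0 1 1 * a 1 0 1 := by
    first | linear_combination E6 / 8 | linear_combination -E6 / 8 | linear_combination E6 | linear_combination -E6
  have m7 : a 0 0 0 * a 1 1 1 = a 0 0 1 * a 1 1 0 := by
    first | linear_combination (E8 - E7) / 16 | linear_combination (E7 - E8) / 16 | linear_combination (E7 + E8) / 16 | linear_combination (-E7 - E8) / 16
  have m8 : a 0 0 0 * a 1 1 1 = a 0 1 0 * a 1 0 1 := by
    first | linear_combination (E9 - E7) / 16 | linear_combination (E7 - E9) / 16 | linear_combination (E7 + E9) / 16 | linear_combination (-E7 - E9) / 16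
  have m9 : a 0 0 0 * a 1 1 1 = a 0 1 1 * a 1 0 0 := by
    first | linear_combination (E10 - E7) / 16 | linear_combination (E7 - E10) / 16 | linear_combination (E7 + E10) / 16 | linear_combination (-E7 - E10) / 16
  have LA : ∀ i i' j j' k k', a i j k * a i' j' k' = a i' j k * a i j' k' := by
    intro i i' j j' k k'
    fin_cases i <;> fin_cases i' <;> fin_cases j <;> fin_cases j' <;> fin_cases k <;> fin_cases k' <;> simp only [Fin.zero_eta, Fin.mk_one] <;>
      (first | rfl | ring1 | linear_combination m1 | linear_combination -m1 | linear_combination m2 | linear_combination -m2 | linear_combination m3 | linear_combination -m3 | linear_combination m4 | linear_combination -m4 | linear_combination m5 | linear_combination -m5 | linear_combination m6 | linear_combination -m6 | linear_combination m7 | linear_combination -m7 | linear_combination m8 | linear_combination -m8 | linear_combination m9 | linear_combination -m9 | linear_combination m7 - m8 | linear_combination m8 - m7 | linear_combination m7 - m9 | linear_combination m9 - m7 | linear_combination m8 - m9 | linear_combination m9 - m8)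
  have LB : ∀ i j j' k k', a i j k * a i j' k' = a i j' k * a i j k' := by
    intro i j j' k k'
    fin_cases i <;> fin_cases j <;> fin_cases j' <;> fin_cases k <;> fin_cases k' <;> simp only [Fin.zero_eta, Fin.mk_one] <;>
      (first | rfl | ring1 | linear_combination m1 | linear_combination -m1 | linear_combination m2 | linear_combination -m2 | linear_combination m3 | linear_combination -m3 | linear_combination m4 | linear_combination -m4 | linear_combination m5 | linear_combination -m5 | linear_combination m6 | linear_combination -m6 | linear_combination m7 | linear_combination -m7 | linear_combination m8 | linear_combination -m8 | linear_combination m9 | linear_combination -m9 | linear_combination m7 - m8 | linear_combination m8 - m7 | linear_combination m7 - m9 | linear_combination m9 - m7 | linear_combination m8 - m9 | linear_combination m9 - m8)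
  have hne : ∃ i j k, a i j k ≠ 0 := by
    by_contra h
    push_neg at h
    exact ha (funext fun i => funext fun j => funext fun k => h i j k)
  obtain ⟨i0, j0, k0, hc⟩ := hne
  have hprod : ∀ i j k, a i j k
      = a i j0 k0 * (a i0 j k0 * (a i0 j0 k * ((a i0 j0 k0)⁻¹ * (a i0 j0 k0)⁻¹))) := by
    intro i j k
    have h1 := LA i i0 j j0 k k0
    have h2 := LB i0 j j0 k k0
    have h3 : a i j k * (a i0 j0 k0 * a i0 j0 k0)
        = a i j0 k0 * a i0 j k0 * a i0 j0 k := by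
      linear_combination a i0 j0 k0 * h1 + a i j0 k0 * h2
    field_simp
    first | linear_combination h3 | linear_combination -h3
  obtain ⟨g₁, hg₁0, hg₁1⟩ := sl2_move (fun i => a i j0 k0) (by
    fin_cases i0
    · exact Or.inl hc
    · exact Or.inr hc)
  obtain ⟨g₂, hg₂0, hg₂1⟩ := sl2_move (fun j => a i0 j k0) (by
    fin_cases j0
    · exact Or.inl hc
    · exact Or.inr hc)
  obtain ⟨g₃, hg₃0, hg₃1⟩ := sl2_move (fun k => a i0 j0 k * ((a i0 j0 k0)⁻¹ * (a i0 j0 k0)⁻¹)) (by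
    have hz : a i0 j0 k0 * ((a i0 j0 k0)⁻¹ * (a i0 j0 k0)⁻¹) ≠ 0 :=
      mul_ne_zero hc (mul_ne_zero (inv_ne_zero hc) (inv_ne_zero hc))
    fin_cases k0
    · exact Or.inl hz
    · exact Or.inr hz)
  refine ⟨g₁, g₂, g₃, ?_⟩
  funext i j k
  simp only [sloccAct, Fin.sum_univ_two]
  rw [hprod 0 0 0, hprod 0 0 1, hprod 0 1 0, hprod 0 1 1, hprod 1 0 0, hprod 1 0 1, hprod 1 1 0, hprod 1 1 1]
  fin_cases i <;> fin_cases j <;> fin_cases k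
  · norm_num [Prod.ext_iff, Fin.zero_eta, Fin.mk_one]
    linear_combination (((g₂ : Matrix (Fin 2) (Fin 2) ℂ) 0 0 * a i0 0 k0 + (g₂ : Matrix (Fin 2) (Fin 2) ℂ) 0 1 * a i0 1 k0) * ((g₃ : Matrix (Fin 2) (Fin 2) ℂ) 0 0 * (a i0 j0 0 * ((a i0 j0 k0)⁻¹ * (a i0 j0 k0)⁻¹)) + (g₃ : Matrix (Fin 2) (Fin 2) ℂ) 0 1 * (a i0 j0 1 * ((a i0 j0 k0)⁻¹ * (a i0 j0 k0)⁻¹)))) * hg₁0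
  · norm_num [Prod.ext_iff, Fin.zero_eta, Fin.mk_one]
    linear_combination (((g₂ : Matrix (Fin 2) (Fin 2) ℂ) 0 0 * a i0 0 k0 + (g₂ : Matrix (Fin 2) (Fin 2) ℂ) 0 1 * a i0 1 k0) * ((g₃ : Matrix (Fin 2) (Fin 2) ℂ) 1 0 * (a i0 j0 0 * ((a i0 j0 k0)⁻¹ * (a i0 j0 k0)⁻¹)) + (g₃ : Matrix (Fin 2) (Fin 2) ℂ) 1 1 * (a i0 j0 1 * ((a i0 j0 k0)⁻¹ * (a i0 j0 k0)⁻¹)))) * hg₁0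
  · norm_num [Prod.ext_iff, Fin.zero_eta, Fin.mk_one]
    linear_combination (((g₂ : Matrix (Fin 2) (Fin 2) ℂ) 1 0 * a i0 0 k0 + (g₂ : Matrix (Fin 2) (Fin 2) ℂ) 1 1 * a i0 1 k0) * ((g₃ : Matrix (Fin 2) (Fin 2) ℂ) 0 0 * (a i0 j0 0 * ((a i0 j0 k0)⁻¹ * (a i0 j0 k0)⁻¹)) + (g₃ : Matrix (Fin 2) (Fin 2) ℂ) 0 1 * (a i0 j0 1 * ((a i0 j0 k0)⁻¹ * (a i0 j0 k0)⁻¹)))) * hg₁0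
  · norm_num [Prod.ext_iff, Fin.zero_eta, Fin.mk_one]
    linear_combination (((g₂ : Matrix (Fin 2) (Fin 2) ℂ) 1 0 * a i0 0 k0 + (g₂ : Matrix (Fin 2) (Fin 2) ℂ) 1 1 * a i0 1 k0) * ((g₃ : Matrix (Fin 2) (Fin 2) ℂ) 1 0 * (a i0 j0 0 * ((a i0 j0 k0)⁻¹ * (a i0 j0 k0)⁻¹)) + (g₃ : Matrix (Fin 2) (Fin 2) ℂ) 1 1 * (a i0 j0 1 * ((a i0 j0 k0)⁻¹ * (a i0 j0 k0)⁻¹)))) * hg₁0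
  · norm_num [Prod.ext_iff, Fin.zero_eta, Fin.mk_one]
    linear_combination (((g₁ : Matrix (Fin 2) (Fin 2) ℂ) 1 0 * a 0 j0 k0 + (g₁ : Matrix (Fin 2) (Fin 2) ℂ) 1 1 * a 1 j0 k0) * ((g₃ : Matrix (Fin 2) (Fin 2) ℂ) 0 0 * (a i0 j0 0 * ((a i0 j0 k0)⁻¹ * (a i0 j0 k0)⁻¹)) + (g₃ : Matrix (Fin 2) (Fin 2) ℂ) 0 1 * (a i0 j0 1 * ((a i0 j0 k0)⁻¹ * (a i0 j0 k0)⁻¹)))) * hg₂0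
  · norm_num [Prod.ext_iff, Fin.zero_eta, Fin.mk_one]
    linear_combination (((g₁ : Matrix (Fin 2) (Fin 2) ℂ) 1 0 * a 0 j0 k0 + (g₁ : Matrix (Fin 2) (Fin 2) ℂ) 1 1 * a 1 j0 k0) * ((g₃ : Matrix (Fin 2) (Fin 2) ℂ) 1 0 * (a i0 j0 0 * ((a i0 j0 k0)⁻¹ * (a i0 j0 k0)⁻¹)) + (g₃ : Matrix (Fin 2) (Fin 2) ℂ) 1 1 * (a i0 j0 1 * ((a i0 j0 k0)⁻¹ * (a i0 j0 k0)⁻¹)))) * hg₂0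
  · norm_num [Prod.ext_iff, Fin.zero_eta, Fin.mk_one]
    linear_combination (((g₁ : Matrix (Fin 2) (Fin 2) ℂ) 1 0 * a 0 j0 k0 + (g₁ : Matrix (Fin 2) (Fin 2) ℂ) 1 1 * a 1 j0 k0) * ((g₂ : Matrix (Fin 2) (Fin 2) ℂ) 1 0 * a i0 0 k0 + (g₂ : Matrix (Fin 2) (Fin 2) ℂ) 1 1 * a i0 1 k0)) * hg₃0
  · norm_num [Prod.ext_iff, Fin.zero_eta, Fin.mk_one]
    linear_combination (((g₂ : Matrix (Fin 2) (Fin 2) ℂ) 1 0 * a i0 0 k0 + (g₂ : Matrix (Fin 2) (Fin 2) ℂ) 1 1 * a i0 1 k0) * ((g₃ : Matrix (Fin 2) (Fin 2) ℂ) 1 0 * (a i0 j0 0 * ((a i0 j0 k0)⁻¹ * (a i0 j0 k0)⁻¹)) + (g₃ : Matrix (Fin 2) (Fin 2) ℂ) 1 1 * (a i0 j0 1 * ((a i0 j0 k0)⁻¹ * (a i0 j0 k0)⁻¹)))) * hg₁1 + ((g₃ : Matrix (Fin 2) (Fin 2) ℂ) 1 0 * (a i0 j0 0 * ((a i0 j0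 k0)⁻¹ * (a i0 j0 k0)⁻¹)) + (g₃ : Matrix (Fin 2) (Fin 2) ℂ) 1 1 * (a i0 j0 1 * ((a i0 j0 k0)⁻¹ * (a i0 j0 k0)⁻¹))) * hg₂1 + hg₃1
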